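/- Let G be of even order and H of odd order, both connected, such that G has at least one vertex of even degree and H has at least one vertex of odd degree. Then γ_coe(G + H) = |E_V(G)| + |O_V(H)|, where E_V(G) is the set of even-degree vertices of G and O_V(H) is the set of odd-degree vertices of H. -/

import Mathlib

open SimpleGraph

/-- `D` is a dominating set of `G`. -/
def IsDomSet {V : Type*} (G : SimpleGraph V) (D : Set V) : Prop :=
  ∀ v ∉ D, ∃ u ∈ D, G.Adj u v

/-- `D` is a co-even dominating set of `G`: a dominating set such that
every vertex outside `D` has even degree. -/
def IsCoEvenDomSet {V : Type*} (G : SimpleGraph V) (D : Set V) : Prop :=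
  IsDomSet G D ∧ ∀ v ∉ D, Even (G.neighborSet v).ncard

/-- The domination number. -/
noncomputable def gammaD {V : Type*} (G : SimpleGraph V) : ℕ :=
  sInf {n | ∃ D : Set V, IsDomSet G D ∧ D.ncard = n}

/-- The co-even domination number. -/
noncomputable def gammaCoe {V : Type*} (G : SimpleGraph V) : ℕ :=
  sInf {n | ∃ D : Set V, IsCoEvenDomSet G D ∧ D.ncard = n}

/-- The set of vertices of odd degree. -/
def oddVerts {V : Type*} (G : SimpleGraph V) : Set V :=
  {v | Odd (G.neighborSet v).ncard}

/-- The set of vertices of even degree. -/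
def evenVerts {V : Type*} (G : SimpleGraph V) : Set V :=
  {v | Even (G.neighborSet v).ncard}

/-- The join `G + H` of two graphs. -/
def joinG {V W : Type*} (G : SimpleGraph V) (H : SimpleGraph W) : SimpleGraph (V ⊕ W) :=
  SimpleGraph.fromRel (fun a b =>
    match a, b with
    | Sum.inl u, Sum.inl v => G.Adj u v
    | Sum.inr u, Sum.inr v => H.Adj u v
    | _, _ => True)

/-- The corona `G ∘ H`: one copy of `G` and `|V(G)|` copies of `H`,
joining the `i`-th vertex of `G` to every vertex of the `i`-th copy of `H`. -/
def corona {V W : Type*} (G : SimpleGraph V) (H : SimpleGraph W) : SimpleGraph (V ⊕ V × W) :=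
  SimpleGraph.fromRel (fun a b =>
    match a, b with
    | Sum.inl u, Sum.inl v => G.Adj u v
    | Sum.inr u, Sum.inr v => u.1 = v.1 ∧ H.Adj u.2 v.2
    | Sum.inl u, Sum.inr v => u = v.1
    | Sum.inr _, Sum.inl _ => False)

/-- The neighbourhood corona `G ⋆ H`: one copy of `G` and `|V(G)|` copies of `H`,
joining every neighbour of the `i`-th vertex of `G` to every vertex of the
`i`-th copy of `H`. -/
def ncorona {V W : Type*} (G : SimpleGraph V) (H : SimpleGraph W) : SimpleGraph (V ⊕ V × W) :=
  SimpleGraph.fromRel (fun a b =>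
    match a, b with
    | Sum.inl u, Sum.inl v => G.Adj u v
    | Sum.inr u, Sum.inr v => u.1 = v.1 ∧ H.Adj u.2 v.2
    | Sum.inl u, Sum.inr v => G.Adj u v.1
    | Sum.inr _, Sum.inl _ => False)

/-- The Hajós sum `G₁(x₁y₁) +_H G₂(x₂y₂)`: delete edges `x₁y₁` and `x₂y₂`,
identify `x₁` with `x₂` (represented here by `Sum.inr x₂`), and add the edge `y₁y₂`. -/
def hajos {V₁ V₂ : Type*} (G₁ : SimpleGraph V₁) (G₂ : SimpleGraph V₂)
    (x₁ y₁ : V₁) (x₂ y₂ : V₂) : SimpleGraph ({v : V₁ // v ≠ x₁} ⊕ V₂) :=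
  SimpleGraph.fromRel (fun a b =>
    match a, b with
    | Sum.inl u, Sum.inl v => G₁.Adj u.1 v.1
    | Sum.inr u, Sum.inr v => G₂.Adj u v ∧ ¬(u = x₂ ∧ v = y₂) ∧ ¬(u = y₂ ∧ v = x₂)
    | Sum.inl u, Sum.inr v => (v = x₂ ∧ G₁.Adj x₁ u.1 ∧ u.1 ≠ y₁) ∨ (u.1 = y₁ ∧ v = y₂)
    | Sum.inr _, Sum.inl _ => False)


section Aux


/-!
Since `|V(G)|` is even and `|V(H)|` is odd, joining flips the degree parity of the vertices of `G`
and keeps that of the vertices of `H`, so the odd-degree vertices of `G + H` are exactly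
`E_V(G) ∪ O_V(H)`. A co-even dominating set must contain every odd-degree vertex, and here the
odd-degree vertices already dominate, since they meet both sides of the join.
-/

section CoEvenDomination

variable {V : Type*} (G : SimpleGraph V)

lemma oddVerts_subset_of_isCoEvenDomSet {D : Set V} (hD : IsCoEvenDomSet G D) :
    oddVerts G ⊆ D := fun v hv => by
  by_contra hvD
  exact Nat.not_odd_iff_even.mpr (hD.2 v hvD) hv

lemma isCoEvenDomSet_oddVerts (h : IsDomSet G (oddVerts G)) : IsCoEvenDomSet G (oddVerts G) :=
  ⟨h, fun _ hv => Nat.not_odd_iff_even.mp hv⟩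

theorem gammaCoe_eq_ncard_oddVerts [Finite V] (h : IsDomSet G (oddVerts G)) :
    gammaCoe G = (oddVerts G).ncard := by
  apply le_antisymm
  · exact Nat.sInf_le ⟨_, isCoEvenDomSet_oddVerts G h, rfl⟩
  · refine le_csInf ⟨_, _, isCoEvenDomSet_oddVerts G h, rfl⟩ ?_
    rintro n ⟨D, hD, rfl⟩
    exact Set.ncard_le_ncard (oddVerts_subset_of_isCoEvenDomSet G hD)

end CoEvenDomination

lemma Set.ncard_image_inl_union_image_inr {α β : Type*} [Finite α] [Finite β]
    (A : Set α) (B : Set β) :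
    (Sum.inl '' A ∪ Sum.inr '' B : Set (α ⊕ β)).ncard = A.ncard + B.ncard := by
  rw [Set.ncard_union_eq (by simp [Set.disjoint_left]),
    Set.ncard_image_of_injective _ Sum.inl_injective,
    Set.ncard_image_of_injective _ Sum.inr_injective]

section Join

variable {V W : Type*} (G : SimpleGraph V) (H : SimpleGraph W)

@[simp]
lemma joinG_adj_inl_inl (u v : V) : (joinG G H).Adj (Sum.inl u) (Sum.inl v) ↔ G.Adj u v := by
  simp only [joinG, fromRel_adj, ne_eq, Sum.inl.injEq, adj_comm G v u, or_self]
  exact ⟨And.right, fun h => ⟨h.ne, h⟩⟩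

@[simp]
lemma joinG_adj_inr_inr (u v : W) : (joinG G H).Adj (Sum.inr u) (Sum.inr v) ↔ H.Adj u v := by
  simp only [joinG, fromRel_adj, ne_eq, Sum.inr.injEq, adj_comm H v u, or_self]
  exact ⟨And.right, fun h => ⟨h.ne, h⟩⟩

@[simp]
lemma joinG_adj_inl_inr (v : V) (w : W) : (joinG G H).Adj (Sum.inl v) (Sum.inr w) := by
  simp [joinG]

@[simp]
lemma joinG_adj_inr_inl (w : W) (v : V) : (joinG G H).Adj (Sum.inr w) (Sum.inl v) :=
  (joinG_adj_inl_inr G H v w).symm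

lemma isDomSet_joinG {D : Set (V ⊕ W)} {v : V} {w : W} (hv : Sum.inl v ∈ D)
    (hw : Sum.inr w ∈ D) : IsDomSet (joinG G H) D := by
  rintro (u | u) -
  · exact ⟨_, hw, joinG_adj_inr_inl G H w u⟩
  · exact ⟨_, hv, joinG_adj_inl_inr G H v u⟩

lemma neighborSet_joinG_inl (v : V) :
    (joinG G H).neighborSet (Sum.inl v) = Sum.inl '' G.neighborSet v ∪ Sum.inr '' Set.univ := by
  ext (u | w) <;> simp

lemma neighborSet_joinG_inr (w : W) :
    (joinG G H).neighborSet (Sum.inr w) = Sum.inl '' Set.univ ∪ Sum.inr '' H.neighborSet w := by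
  ext (v | u) <;> simp

variable [Finite V] [Finite W]

lemma ncard_neighborSet_joinG_inl (v : V) :
    ((joinG G H).neighborSet (Sum.inl v)).ncard = (G.neighborSet v).ncard + Nat.card W := by
  rw [neighborSet_joinG_inl, Set.ncard_image_inl_union_image_inr, Set.ncard_univ]

lemma ncard_neighborSet_joinG_inr (w : W) :
    ((joinG G H).neighborSet (Sum.inr w)).ncard = Nat.card V + (H.neighborSet w).ncard := by
  rw [neighborSet_joinG_inr, Set.ncard_image_inl_union_image_inr, Set.ncard_univ]

lemma oddVerts_joinG (hV : Even (Nat.card V)) (hW : Odd (Nat.card W)) :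
    oddVerts (joinG G H) = Sum.inl '' evenVerts G ∪ Sum.inr '' oddVerts H := by
  ext (v | w)
  · simp [oddVerts, evenVerts, ncard_neighborSet_joinG_inl, Nat.odd_add, Nat.not_even_iff_odd.mpr hW]
  · simp [oddVerts, ncard_neighborSet_joinG_inr, Nat.odd_add', hV]

end Join

theorem stmt8_general {V W : Type*} [Fintype V] [Fintype W]
    (G : SimpleGraph V) (H : SimpleGraph W)
    (hV : Even (Fintype.card V)) (hW : Odd (Fintype.card W))
    (hEG : ∃ v, Even (G.neighborSet v).ncard)
    (hOH : ∃ w, Odd (H.neighborSet w).ncard) :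
    gammaCoe (joinG G H) = (evenVerts G).ncard + (oddVerts H).ncard := by
  obtain ⟨v, hv⟩ := hEG
  obtain ⟨w, hw⟩ := hOH
  rw [← Nat.card_eq_fintype_card] at hV hW
  have hodd := oddVerts_joinG G H hV hW
  have hdom : IsDomSet (joinG G H) (oddVerts (joinG G H)) := by
    rw [hodd]
    exact isDomSet_joinG G H (Or.inl ⟨v, hv, rfl⟩) (Or.inr ⟨w, hw, rfl⟩)
  rw [gammaCoe_eq_ncard_oddVerts _ hdom, hodd, Set.ncard_image_inl_union_image_inr]

theorem stmt8 {V W : Type*} [Fintype V] [Fintype W]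
    (G : SimpleGraph V) (H : SimpleGraph W)
    (hG : G.Connected) (hH : H.Connected)
    (hV : Even (Fintype.card V)) (hW : Odd (Fintype.card W))
    (hEG : ∃ v, Even (G.neighborSet v).ncard)
    (hOH : ∃ w, Odd (H.neighborSet w).ncard) :
    gammaCoe (joinG G H) = (evenVerts G).ncard + (oddVerts H).ncard :=
  stmt8_general G H hV hW hEG hOH
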